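/- arXiv:2209.04625 — 3 statements merged into one kernel-verified Lean document; each statement's English description precedes it below -/
import Mathlib

section
/- Let n ≥ 2, let p ∈ (1, ∞) be a real number, set c_p = p/(p + n − 2), fix x̄ ∈ ℝⁿ and R > 0, and define u(x) = (c_p/2)(R² − ‖x − x̄‖²). Then for every x ≠ x̄, the divergence of the vector field F(y) = ‖∇u(y)‖^{p−2} ∇u(y) at x equals −p·(c_p ‖x − x̄‖)^{p−2}; equivalently, (1/p)·‖∇u(x)‖^{2−p} · div F(x) = −1, so that u satisfies the divergence-form equation −(1/p)|Du|^{2−p} div(|Du|^{p−2} Du) = 1 classically away from the center. -/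
open Filter Topology Metric RealInnerProductSpace

/-- The divergence of a vector field `F` at `x`: the trace of its Fréchet derivative,
computed via the standard orthonormal basis. -/
noncomputable def diverg {n : ℕ}
    (F : EuclideanSpace ℝ (Fin n) → EuclideanSpace ℝ (Fin n))
    (x : EuclideanSpace ℝ (Fin n)) : ℝ :=
  ∑ i : Fin n,
    ⟪fderiv ℝ F x (EuclideanSpace.single i 1),
      (EuclideanSpace.single i 1 : EuclideanSpace ℝ (Fin n))⟫

/-!
The gradient of `u` is `-c (x - x̄)`, so `F(y) = -c^{p-1} ‖y - x̄‖^{p-2} (y - x̄)`. A radial field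
`‖y‖^q y` has divergence `(n + q) ‖y‖^q` away from the origin (the identity contributes `n`, the
radial factor `q`), and the choice `c = p / (p + n - 2)` makes `c (n + p - 2) = p`.
-/

section InnerProductSpace

variable {E : Type*} [NormedAddCommGroup E] [InnerProductSpace ℝ E]

theorem hasFDerivAt_norm_sub_sq (x₀ x : E) :
    HasFDerivAt (fun y => ‖y - x₀‖ ^ 2) (2 • innerSL ℝ (x - x₀)) x := by
  simpa using ((hasFDerivAt_id x).sub_const x₀).norm_sq

theorem hasFDerivAt_norm_sub_rpow {x x₀ : E} (hx : x ≠ x₀) (q : ℝ) :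
    HasFDerivAt (fun y => ‖y - x₀‖ ^ q) ((q * ‖x - x₀‖ ^ (q - 2)) • innerSL ℝ (x - x₀)) x := by
  have hpos : 0 < ‖x - x₀‖ := norm_pos_iff.2 (sub_ne_zero.2 hx)
  have key := (hasFDerivAt_norm_sub_sq x₀ x).rpow_const (p := q / 2) (Or.inl (by positivity))
  have hsq : ∀ t : ℝ, 0 ≤ t → ∀ r : ℝ, (t ^ 2) ^ (r / 2) = t ^ r := fun t ht r => by
    rw [Real.rpow_div_two_eq_sqrt r (sq_nonneg t), Real.sqrt_sq ht]
  simp only [hsq _ (norm_nonneg _)] at key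
  refine key.congr_fderiv ?_
  rw [show q / 2 - 1 = (q - 2) / 2 by ring, hsq _ hpos.le]
  ext v
  simp only [map_sub, smul_apply, sub_apply, coe_innerSL_apply, nsmul_eq_mul, Nat.cast_ofNat,
    smul_eq_mul]
  ring

theorem hasGradientAt_paraboloid [CompleteSpace E] (c R : ℝ) (x₀ y : E) :
    HasGradientAt (fun z => c / 2 * (R ^ 2 - ‖z - x₀‖ ^ 2)) ((-c) • (y - x₀)) y := by
  rw [hasGradientAt_iff_hasFDerivAt]
  refine (((hasFDerivAt_norm_sub_sq x₀ y).const_sub (R ^ 2)).const_mul (c / 2)).congr_fderiv ?_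
  ext v
  simp only [map_sub, smul_neg, neg_apply, smul_apply, sub_apply, coe_innerSL_apply, nsmul_eq_mul,
    Nat.cast_ofNat, smul_eq_mul, neg_smul, map_neg, map_smul, InnerProductSpace.toDual_apply_apply,
    neg_inj]
  ring

end InnerProductSpace

section Divergence

variable {n : ℕ}

theorem diverg_eq_trace (F : EuclideanSpace ℝ (Fin n) → EuclideanSpace ℝ (Fin n))
    (x : EuclideanSpace ℝ (Fin n)) :
    diverg F x = LinearMap.trace ℝ _ (fderiv ℝ F x : EuclideanSpace ℝ (Fin n) →ₗ[ℝ] _) := by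
  rw [LinearMap.trace_eq_sum_inner _ (EuclideanSpace.basisFun (Fin n) ℝ), diverg]
  simp [real_inner_comm]

theorem diverg_const_smul (a : ℝ) (F : EuclideanSpace ℝ (Fin n) → EuclideanSpace ℝ (Fin n))
    (x : EuclideanSpace ℝ (Fin n)) :
    diverg (fun y => a • F y) x = a * diverg F x := by
  rw [diverg_eq_trace, diverg_eq_trace, ← Pi.smul_def, fderiv_const_smul_field]
  simp only [Pi.smul_apply, ContinuousLinearMap.toLinearMap_smul, map_smul, smul_eq_mul]

theorem diverg_smul_sub {φ : EuclideanSpace ℝ (Fin n) → ℝ} {φ' : EuclideanSpace ℝ (Fin n) →L[ℝ] ℝ}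
    {x : EuclideanSpace ℝ (Fin n)} (hφ : HasFDerivAt φ φ' x) (x₀ : EuclideanSpace ℝ (Fin n)) :
    diverg (fun y => φ y • (y - x₀)) x = n * φ x + φ' (x - x₀) := by
  have hF : HasFDerivAt (fun y => φ y • (y - x₀))
      (φ x • ContinuousLinearMap.id ℝ _ + φ'.smulRight (x - x₀)) x :=
    hφ.smul ((hasFDerivAt_id x).sub_const x₀)
  rw [diverg_eq_trace, hF.fderiv]
  simp only [ContinuousLinearMap.toLinearMap_add, ContinuousLinearMap.toLinearMap_smul,
    ContinuousLinearMap.coe_id, ContinuousLinearMap.coe_smulRight, map_add, map_smul,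
    LinearMap.trace_id, finrank_euclideanSpace, Fintype.card_fin, smul_eq_mul,
    LinearMap.trace_smulRight, ContinuousLinearMap.coe_coe]
  ring

theorem diverg_norm_sub_rpow_smul {x x₀ : EuclideanSpace ℝ (Fin n)} (hx : x ≠ x₀) (q : ℝ) :
    diverg (fun y => ‖y - x₀‖ ^ q • (y - x₀)) x = (n + q) * ‖x - x₀‖ ^ q := by
  rw [diverg_smul_sub (hasFDerivAt_norm_sub_rpow hx q)]
  have hpos : 0 < ‖x - x₀‖ := norm_pos_iff.2 (sub_ne_zero.2 hx)
  simp only [smul_apply, coe_innerSL_apply, real_inner_self_eq_norm_sq, smul_eq_mul,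
    Real.rpow_sub hpos, Real.rpow_two]
  field_simp

end Divergence

theorem radial_solution_divergence_form_general
    {n : ℕ} (hn : 2 ≤ n) (p : ℝ) (hp : 1 < p)
    (c : ℝ) (hc : c = p / (p + n - 2))
    (xbar : EuclideanSpace ℝ (Fin n)) (R : ℝ)
    (u : EuclideanSpace ℝ (Fin n) → ℝ)
    (hu : ∀ x, u x = c / 2 * (R ^ 2 - ‖x - xbar‖ ^ 2))
    (F : EuclideanSpace ℝ (Fin n) → EuclideanSpace ℝ (Fin n))
    (hF : ∀ y, F y = ‖gradient u y‖ ^ (p - 2) • gradient u y)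
    (x : EuclideanSpace ℝ (Fin n)) (hx : x ≠ xbar) :
    diverg F x = -p * (c * ‖x - xbar‖) ^ (p - 2) ∧
      1 / p * ‖gradient u x‖ ^ (2 - p) * diverg F x = -1 := by
  have hpn : 0 < p + n - 2 := by
    have : (2 : ℝ) ≤ n := by exact_mod_cast hn
    linarith
  have hc0 : 0 < c := hc ▸ div_pos (by linarith) hpn
  have hgrad : ∀ y, gradient u y = (-c) • (y - xbar) := fun y => by
    rw [show u = _ from funext hu]
    exact (hasGradientAt_paraboloid c R xbar y).gradient
  have hnorm : ∀ y, ‖gradient u y‖ = c * ‖y - xbar‖ := fun y => by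
    rw [hgrad, norm_smul, norm_neg, Real.norm_of_nonneg hc0.le]
  have hF_radial : F = fun y => (-c ^ (p - 1)) • (‖y - xbar‖ ^ (p - 2) • (y - xbar)) := by
    funext y
    rw [hF, hnorm, hgrad, smul_smul, smul_smul, Real.mul_rpow hc0.le (norm_nonneg _),
      show p - 1 = p - 2 + 1 by ring, Real.rpow_add_one hc0.ne']
    congr 1
    ring
  have hdiv : diverg F x = -p * (c * ‖x - xbar‖) ^ (p - 2) := by
    rw [hF_radial, diverg_const_smul, diverg_norm_sub_rpow_smul hx,
      Real.mul_rpow hc0.le (norm_nonneg _), show p - 1 = p - 2 + 1 by ring,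
      Real.rpow_add_one hc0.ne']
    have hcp : c * (n + (p - 2)) = p := by rw [hc]; field_simp; ring
    linear_combination (-(c ^ (p - 2) * ‖x - xbar‖ ^ (p - 2))) * hcp
  refine ⟨hdiv, ?_⟩
  have hpos : 0 < c * ‖x - xbar‖ := mul_pos hc0 (norm_pos_iff.2 (sub_ne_zero.2 hx))
  rw [hdiv, hnorm]
  field_simp
  rw [← Real.rpow_add hpos]
  norm_num

/-- The radial function `u(x) = (c_p/2)(R² − ‖x − x̄‖²)` satisfies the divergence-form equation
`−(1/p)|Du|^{2−p} div(|Du|^{p−2} Du) = 1` classically away from the center, for `1 < p < ∞`. -/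
theorem radial_solution_divergence_form
    {n : ℕ} (hn : 2 ≤ n) (p : ℝ) (hp : 1 < p)
    (c : ℝ) (hc : c = p / (p + n - 2))
    (xbar : EuclideanSpace ℝ (Fin n)) (R : ℝ) (hR : 0 < R)
    (u : EuclideanSpace ℝ (Fin n) → ℝ)
    (hu : ∀ x, u x = c / 2 * (R ^ 2 - ‖x - xbar‖ ^ 2))
    (F : EuclideanSpace ℝ (Fin n) → EuclideanSpace ℝ (Fin n))
    (hF : ∀ y, F y = ‖gradient u y‖ ^ (p - 2) • gradient u y)
    (x : EuclideanSpace ℝ (Fin n)) (hx : x ≠ xbar) :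
    diverg F x = -p * (c * ‖x - xbar‖) ^ (p - 2) ∧
      1 / p * ‖gradient u x‖ ^ (2 - p) * diverg F x = -1 :=
  radial_solution_divergence_form_general hn p hp c hc xbar R u hu F hF x hx
end

section
/- Let n ≥ 1 and let Ω ⊆ ℝⁿ be a bounded open set. Let u be continuous on the closure of Ω, twice differentiable on Ω with Δu(x) = −2 for all x ∈ Ω, and suppose u ≥ 0 on the frontier of Ω. If x̄ ∈ ℝⁿ and R > 0 are such that the open ball B(x̄, R) is contained in Ω, then u(x) ≥ (R² − ‖x − x̄‖²)/n for every x in the closed ball of radius R about x̄. -/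
open Filter Topology Metric

/-- The Laplacian of `u` at `x`: the trace of the Hessian (second Fréchet derivative),
computed as the sum of the diagonal entries in the standard orthonormal basis. -/
noncomputable def laplacian {n : ℕ} (u : EuclideanSpace ℝ (Fin n) → ℝ)
    (x : EuclideanSpace ℝ (Fin n)) : ℝ :=
  ∑ i : Fin n, fderiv ℝ (fderiv ℝ u) x (EuclideanSpace.single i 1) (EuclideanSpace.single i 1)

/-!
At an interior minimum every second directional derivative is nonnegative, hence so is the
Laplacian. A strict supersolution (`Δf < 0`) of a bounded open set therefore attains its minimum
over the closure on the frontier. Applied to `u` this gives `u ≥ 0` on `closure Ω`, in particular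
on the sphere `‖x - x̄‖ = R`. For `s < 1` the function `u - s v`, with `v` the radial solution,
has Laplacian `-2 (1 - s) < 0` on the ball and is nonnegative on the sphere, so `s v ≤ u`;
now let `s → 1`.
-/

/-- A negative second derivative would make `t` also a local maximum, so `g` would be locally
constant and its second derivative would vanish. -/
theorem IsLocalMin.deriv_deriv_nonneg {g : ℝ → ℝ} {t : ℝ} (hmin : IsLocalMin g t)
    (hc : ContinuousAt g t) : 0 ≤ deriv (deriv g) t := by
  by_contra! hneg
  have hmax : IsLocalMax g t := isLocalMax_of_deriv_deriv_neg hneg hmin.deriv_eq_zero hc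
  have hconst : g =ᶠ[𝓝 t] fun _ => g t :=
    (hmin.and hmax).mono fun _ h => le_antisymm h.2 h.1
  have : deriv (deriv g) t = 0 := by
    rw [hconst.deriv.deriv_eq]
    simp
  exact hneg.ne this

section Calculus

variable {E : Type*} [NormedAddCommGroup E] [NormedSpace ℝ E]

theorem IsLocalMin.fderiv_fderiv_apply_self_nonneg {f : E → ℝ} {x : E} (hmin : IsLocalMin f x)
    (hf : ∀ᶠ y in 𝓝 x, DifferentiableAt ℝ f y) (hf2 : DifferentiableAt ℝ (fderiv ℝ f) x)
    (v : E) : 0 ≤ fderiv ℝ (fderiv ℝ f) x v v := by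
  set line : ℝ → E := fun t => x + t • v with line_def
  have hline : ∀ t, HasDerivAt line v t := fun t => by
    simpa [line_def] using ((hasDerivAt_id t).smul_const v).const_add x
  have hline0 : line 0 = x := by simp [line_def]
  have htend : Tendsto line (𝓝 0) (𝓝 x) := hline0 ▸ (hline 0).continuousAt
  have hderiv : deriv (f ∘ line) =ᶠ[𝓝 0] fun t => fderiv ℝ f (line t) v :=
    (htend.eventually hf).mono fun t ht => (ht.hasFDerivAt.comp_hasDerivAt t (hline t)).deriv
  have hderiv2 :
      HasDerivAt (fun t => fderiv ℝ f (line t) v) (fderiv ℝ (fderiv ℝ f) x v v) 0 := by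
    have := (hline0 ▸ hf2).hasFDerivAt.comp_hasDerivAt (0 : ℝ) (hline 0)
    simpa [hline0] using this.clm_apply (hasDerivAt_const (0 : ℝ) v)
  rw [← (hderiv2.congr_of_eventuallyEq hderiv).deriv]
  refine IsLocalMin.deriv_deriv_nonneg ?_ ?_
  · exact (hline0 ▸ hmin : IsLocalMin f (line 0)).comp_continuous (hline 0).continuousAt
  · exact (hline0 ▸ hf.self_of_nhds.continuousAt).comp (hline 0).continuousAt

theorem hasFDerivAt_fderiv_sub {f g : E → ℝ} {x : E}
    (hf : ∀ᶠ y in 𝓝 x, DifferentiableAt ℝ f y) (hg : ∀ᶠ y in 𝓝 x, DifferentiableAt ℝ g y)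
    (hf2 : DifferentiableAt ℝ (fderiv ℝ f) x) (hg2 : DifferentiableAt ℝ (fderiv ℝ g) x) :
    HasFDerivAt (fderiv ℝ (f - g)) (fderiv ℝ (fderiv ℝ f) x - fderiv ℝ (fderiv ℝ g) x) x := by
  refine (hf2.hasFDerivAt.sub hg2.hasFDerivAt).congr_of_eventuallyEq ?_
  filter_upwards [hf, hg] with y hfy hgy using fderiv_sub hfy hgy

end Calculus

section Quadratic

variable {F : Type*} [NormedAddCommGroup F] [InnerProductSpace ℝ F]

theorem hasFDerivAt_const_sub_mul_norm_sub_sq (a b : ℝ) (c y : F) :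
    HasFDerivAt (fun y => a - b * ‖y - c‖ ^ 2) (-(2 * b) • innerSL ℝ (y - c)) y := by
  refine (((((hasFDerivAt_id y).sub_const c).norm_sq).const_mul b).const_sub a).congr_fderiv ?_
  ext v
  simp
  ring

theorem fderiv_const_sub_mul_norm_sub_sq (a b : ℝ) (c : F) :
    fderiv ℝ (fun y => a - b * ‖y - c‖ ^ 2) = fun y => -(2 * b) • innerSL ℝ (y - c) :=
  funext fun y => (hasFDerivAt_const_sub_mul_norm_sub_sq a b c y).fderiv

theorem hasFDerivAt_fderiv_const_sub_mul_norm_sub_sq (a b : ℝ) (c x : F) :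
    HasFDerivAt (fderiv ℝ (fun y => a - b * ‖y - c‖ ^ 2))
      (-(2 * b) • innerSL ℝ : F →L[ℝ] F →L[ℝ] ℝ) x := by
  rw [fderiv_const_sub_mul_norm_sub_sq]
  exact (((innerSL ℝ).hasFDerivAt).comp x ((hasFDerivAt_id x).sub_const c)).const_smul (-(2 * b))

end Quadratic

section Laplacian

variable {n : ℕ}

theorem IsLocalMin.laplacian_nonneg {f : EuclideanSpace ℝ (Fin n) → ℝ}
    {x : EuclideanSpace ℝ (Fin n)} (hmin : IsLocalMin f x)
    (hf : ∀ᶠ y in 𝓝 x, DifferentiableAt ℝ f y) (hf2 : DifferentiableAt ℝ (fderiv ℝ f) x) :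
    0 ≤ laplacian f x :=
  Finset.sum_nonneg fun _ _ => hmin.fderiv_fderiv_apply_self_nonneg hf hf2 _

theorem laplacian_sub {f g : EuclideanSpace ℝ (Fin n) → ℝ} {x : EuclideanSpace ℝ (Fin n)}
    (hf : ∀ᶠ y in 𝓝 x, DifferentiableAt ℝ f y) (hg : ∀ᶠ y in 𝓝 x, DifferentiableAt ℝ g y)
    (hf2 : DifferentiableAt ℝ (fderiv ℝ f) x) (hg2 : DifferentiableAt ℝ (fderiv ℝ g) x) :
    laplacian (f - g) x = laplacian f x - laplacian g x := by
  simp only [laplacian, (hasFDerivAt_fderiv_sub hf hg hf2 hg2).fderiv, ← Finset.sum_sub_distrib]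
  rfl

theorem laplacian_const_sub_mul_norm_sub_sq (a b : ℝ) (c x : EuclideanSpace ℝ (Fin n)) :
    laplacian (fun y => a - b * ‖y - c‖ ^ 2) x = -(2 * n * b) := by
  simp only [laplacian, (hasFDerivAt_fderiv_const_sub_mul_norm_sub_sq a b c x).fderiv,
    FunLike.coe_smul, Pi.smul_apply, smul_eq_mul]
  conv_lhs => arg 2; ext i; rw [innerSL_apply_apply]
  simp
  ring

theorem nonneg_on_closure_of_laplacian_neg {S : Set (EuclideanSpace ℝ (Fin n))}
    (hSo : IsOpen S) (hSb : Bornology.IsBounded S) {f : EuclideanSpace ℝ (Fin n) → ℝ}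
    (hcont : ContinuousOn f (closure S))
    (hdiff : ∀ x ∈ S, DifferentiableAt ℝ f x ∧ DifferentiableAt ℝ (fderiv ℝ f) x)
    (hlap : ∀ x ∈ S, laplacian f x < 0) (hbdry : ∀ x ∈ frontier S, 0 ≤ f x) :
    ∀ x ∈ closure S, 0 ≤ f x := by
  rcases S.eq_empty_or_nonempty with rfl | hne
  · simp
  obtain ⟨x₀, hx₀, hmin⟩ := hSb.isCompact_closure.exists_isMinOn hne.closure hcont
  suffices 0 ≤ f x₀ from fun x hx => this.trans (hmin hx)
  rw [closure_eq_interior_union_frontier, hSo.interior_eq] at hx₀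
  rcases hx₀ with hx₀ | hx₀
  · have hloc : IsLocalMin f x₀ :=
      hmin.isLocalMin (mem_of_superset (hSo.mem_nhds hx₀) subset_closure)
    have hf : ∀ᶠ y in 𝓝 x₀, DifferentiableAt ℝ f y :=
      eventually_of_mem (hSo.mem_nhds hx₀) fun y hy => (hdiff y hy).1
    exact absurd (hloc.laplacian_nonneg hf (hdiff x₀ hx₀).2) (hlap x₀ hx₀).not_ge
  · exact hbdry x₀ hx₀

theorem radial_le_of_laplacian_eq_neg_two (hn : n ≠ 0) {c : EuclideanSpace ℝ (Fin n)} {R : ℝ}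
    (hR : 0 < R) {u : EuclideanSpace ℝ (Fin n) → ℝ} (hcont : ContinuousOn u (closedBall c R))
    (hdiff : ∀ x ∈ ball c R, DifferentiableAt ℝ u x ∧ DifferentiableAt ℝ (fderiv ℝ u) x)
    (hlap : ∀ x ∈ ball c R, laplacian u x = -2) (hbdry : ∀ x ∈ sphere c R, 0 ≤ u x) :
    ∀ x ∈ closedBall c R, (R ^ 2 - ‖x - c‖ ^ 2) / n ≤ u x := by
  have hscaled : ∀ s < 1, ∀ x ∈ closedBall c R, s * ((R ^ 2 - ‖x - c‖ ^ 2) / n) ≤ u x := by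
    intro s hs
    set v : EuclideanSpace ℝ (Fin n) → ℝ := fun y => s * R ^ 2 / n - s / n * ‖y - c‖ ^ 2
    have hv1 : ∀ y, DifferentiableAt ℝ v y := fun y =>
      (hasFDerivAt_const_sub_mul_norm_sub_sq _ _ c y).differentiableAt
    have hv2 : ∀ y, DifferentiableAt ℝ (fderiv ℝ v) y := fun y =>
      (hasFDerivAt_fderiv_const_sub_mul_norm_sub_sq _ _ c y).differentiableAt
    have hu1 : ∀ y ∈ ball c R, ∀ᶠ z in 𝓝 y, DifferentiableAt ℝ u z := fun y hy =>
      eventually_of_mem (isOpen_ball.mem_nhds hy) fun z hz => (hdiff z hz).1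
    have hw : ∀ x ∈ closure (ball c R), 0 ≤ (u - v) x := by
      refine nonneg_on_closure_of_laplacian_neg isOpen_ball isBounded_ball ?_ ?_ ?_ ?_
      · rw [closure_ball c hR.ne']
        exact hcont.sub (by fun_prop)
      · intro y hy
        exact ⟨(hdiff y hy).1.sub (hv1 y), (hasFDerivAt_fderiv_sub (hu1 y hy)
          (.of_forall hv1) (hdiff y hy).2 (hv2 y)).differentiableAt⟩
      · intro y hy
        rw [laplacian_sub (hu1 y hy) (.of_forall hv1) (hdiff y hy).2 (hv2 y), hlap y hy,
          laplacian_const_sub_mul_norm_sub_sq]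
        field_simp
        linarith
      · intro y hy
        rw [frontier_ball c hR.ne'] at hy
        have hv0 : v y = 0 := by
          simp [v, mem_sphere_iff_norm.mp hy]
          ring
        simpa [hv0] using hbdry y hy
    intro x hx
    have hx' := hw x (by rwa [closure_ball c hR.ne'])
    rw [Pi.sub_apply, sub_nonneg] at hx'
    convert hx' using 1
    ring
  intro x hx
  have hlim : Tendsto (fun s => s * ((R ^ 2 - ‖x - c‖ ^ 2) / n)) (𝓝[<] 1)
      (𝓝 ((R ^ 2 - ‖x - c‖ ^ 2) / n)) :=
    ((continuous_mul_const _).tendsto' 1 _ (one_mul _)).mono_left nhdsWithin_le_nhds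
  exact le_of_tendsto hlim (eventually_nhdsWithin_of_forall fun s hs => hscaled s hs x hx)

end Laplacian

/-- Comparison with the radial solution on an inscribed ball: a supersolution of
`Δu = −2` (i.e. `−Δ₂ᴺ u = 1`) which is nonnegative on `∂Ω` dominates the radial
solution `(R² − ‖x − x̄‖²)/n` on every ball `B(x̄, R) ⊆ Ω`. -/
theorem comparison_inscribed_ball
    {n : ℕ} (hn : 1 ≤ n) (Ω : Set (EuclideanSpace ℝ (Fin n)))
    (hΩo : IsOpen Ω) (hΩb : Bornology.IsBounded Ω)
    (u : EuclideanSpace ℝ (Fin n) → ℝ)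
    (hcont : ContinuousOn u (closure Ω))
    (hdiff : ∀ x ∈ Ω, DifferentiableAt ℝ u x ∧ DifferentiableAt ℝ (fderiv ℝ u) x)
    (hlap : ∀ x ∈ Ω, laplacian u x = -2)
    (hbdry : ∀ x ∈ frontier Ω, 0 ≤ u x)
    (xbar : EuclideanSpace ℝ (Fin n)) (R : ℝ) (hR : 0 < R)
    (hball : Metric.ball xbar R ⊆ Ω) :
    ∀ x ∈ Metric.closedBall xbar R, (R ^ 2 - ‖x - xbar‖ ^ 2) / n ≤ u x := by
  have hu : ∀ x ∈ closure Ω, 0 ≤ u x :=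
    nonneg_on_closure_of_laplacian_neg hΩo hΩb hcont hdiff
      (fun x hx => by rw [hlap x hx]; norm_num) hbdry
  have hcb : closedBall xbar R ⊆ closure Ω := closure_ball xbar hR.ne' ▸ closure_mono hball
  exact radial_le_of_laplacian_eq_neg_two (by omega) hR (hcont.mono hcb)
    (fun x hx => hdiff x (hball hx)) (fun x hx => hlap x (hball hx))
    (fun x hx => hu x (hcb (sphere_subset_closedBall hx)))
end

section
/- Let n ≥ 1 and let Ω ⊆ ℝⁿ be a bounded open set. Let u be continuous on the closure of Ω, twice differentiable on Ω with Δu(x) = −2 for all x ∈ Ω, and suppose u = 0 on the frontier of Ω. If x̄ ∈ ℝⁿ and R > 0 are such that Ω is contained in the closed ball of radius R about x̄, then u(x) ≤ (R² − ‖x − x̄‖²)/n for every x in the closure of Ω. -/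
/-!
Weak maximum principle by perturbation. For `c > 1/n` the function
`u + c‖x - x̄‖²` has Laplacian `-2 + 2nc > 0` in `Ω`, so it cannot have an interior maximum,
where the Hessian is negative semidefinite and the Laplacian therefore `≤ 0`. Its maximum over
the compact set `closure Ω` is thus attained on `frontier Ω`, where it is at most `cR²`.
Hence `u ≤ c (R² - ‖x - x̄‖²)` on `closure Ω`, and `c ↓ 1/n` gives the claim.
-/

open Filter Topology Metric

theorem IsLocalMax.deriv_deriv_nonpos {f : ℝ → ℝ} {t : ℝ} (hmax : IsLocalMax f t)
    (hc : ContinuousAt f t) : deriv (deriv f) t ≤ 0 := by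
  by_contra! hpos
  have hmin : IsLocalMin f t := isLocalMin_of_deriv_deriv_pos hpos hmax.deriv_eq_zero hc
  have hconst : f =ᶠ[𝓝 t] fun _ => f t := by
    filter_upwards [hmax, hmin] with s h₁ h₂ using le_antisymm h₁ h₂
  have : deriv (deriv f) t = 0 := by
    rw [hconst.deriv.deriv_eq]
    simp
  exact hpos.ne' this

theorem IsLocalMax.fderiv_fderiv_apply_self_nonpos {E : Type*} [NormedAddCommGroup E]
    [NormedSpace ℝ E] {f : E → ℝ} {x : E} (hmax : IsLocalMax f x)
    (hf : ∀ᶠ y in 𝓝 x, DifferentiableAt ℝ f y) (hf' : DifferentiableAt ℝ (fderiv ℝ f) x)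
    (v : E) : fderiv ℝ (fderiv ℝ f) x v v ≤ 0 := by
  have hline : ∀ t : ℝ, HasDerivAt (fun s : ℝ => x + s • v) v t := fun t => by
    simpa using ((hasDerivAt_id t).smul_const v).const_add x
  have hline0 : x = x + (0 : ℝ) • v := by simp
  have hderiv : deriv (fun t : ℝ => f (x + t • v)) =ᶠ[𝓝 0] fun t => fderiv ℝ f (x + t • v) v := by
    have := (hline 0).continuousAt.eventually (hline0 ▸ hf)
    filter_upwards [this] with t ht using (ht.hasFDerivAt.comp_hasDerivAt t (hline t)).deriv
  have hderiv2 : HasDerivAt (fun t : ℝ => fderiv ℝ f (x + t • v) v)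
      (fderiv ℝ (fderiv ℝ f) x v v) 0 :=
    (ContinuousLinearMap.apply ℝ ℝ v).hasFDerivAt.comp_hasDerivAt 0
      (hf'.hasFDerivAt.comp_hasDerivAt_of_eq 0 (hline 0) hline0)
  rw [← hderiv2.deriv, ← hderiv.deriv_eq]
  refine IsLocalMax.deriv_deriv_nonpos ?_ ?_
  · exact IsLocalMax.comp_continuous (g := fun s : ℝ => x + s • v) (hline0 ▸ hmax)
      (hline 0).continuousAt
  · exact ContinuousAt.comp (g := f) (hline0 ▸ hf.self_of_nhds.continuousAt)
      (hline 0).continuousAt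

theorem hasFDerivAt_fderiv_add {E : Type*} [NormedAddCommGroup E] [NormedSpace ℝ E]
    {u v : E → ℝ} {x : E}
    (hu : ∀ᶠ y in 𝓝 x, DifferentiableAt ℝ u y) (hu' : DifferentiableAt ℝ (fderiv ℝ u) x)
    (hv : ∀ᶠ y in 𝓝 x, DifferentiableAt ℝ v y) (hv' : DifferentiableAt ℝ (fderiv ℝ v) x) :
    HasFDerivAt (fderiv ℝ fun y => u y + v y)
      (fderiv ℝ (fderiv ℝ u) x + fderiv ℝ (fderiv ℝ v) x) x := by
  have heq : (fderiv ℝ fun y => u y + v y) =ᶠ[𝓝 x] fun y => fderiv ℝ u y + fderiv ℝ v y := by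
    filter_upwards [hu, hv] with y hy hy' using fderiv_add hy hy'
  exact (hu'.hasFDerivAt.add hv'.hasFDerivAt).congr_of_eventuallyEq heq

open RealInnerProductSpace in
theorem fderiv_fderiv_mul_norm_sub_sq_apply {E : Type*} [NormedAddCommGroup E]
    [InnerProductSpace ℝ E] (c : ℝ) (a x v w : E) :
    fderiv ℝ (fderiv ℝ fun y => c * ‖y - a‖ ^ 2) x v w = 2 * c * ⟪v, w⟫ := by
  -- `innerSL ℝ` is conjugate-linear in its first argument; over `ℝ` this is plain linearity.
  let L : E →L[ℝ] E →L[ℝ] ℝ := (2 * c) • innerSL ℝ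
  have hL_apply : ∀ v w, L v w = 2 * c * ⟪v, w⟫ := fun _ _ => rfl
  have hfderiv : fderiv ℝ (fun y => c * ‖y - a‖ ^ 2) = fun y => L (y - a) := by
    funext y
    refine (((hasFDerivAt_id y).sub_const a).norm_sq.const_mul c).fderiv.trans ?_
    ext z
    simp [hL_apply]
    ring
  have hL : HasFDerivAt (fun y => L (y - a)) L x :=
    L.hasFDerivAt.comp x ((hasFDerivAt_id x).sub_const a)
  rw [hfderiv, hL.fderiv, hL_apply]

theorem laplacian_add {n : ℕ} {u v : EuclideanSpace ℝ (Fin n) → ℝ} {x : EuclideanSpace ℝ (Fin n)}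
    (hu : ∀ᶠ y in 𝓝 x, DifferentiableAt ℝ u y) (hu' : DifferentiableAt ℝ (fderiv ℝ u) x)
    (hv : ∀ᶠ y in 𝓝 x, DifferentiableAt ℝ v y) (hv' : DifferentiableAt ℝ (fderiv ℝ v) x) :
    laplacian (fun y => u y + v y) x = laplacian u x + laplacian v x := by
  simp [laplacian, (hasFDerivAt_fderiv_add hu hu' hv hv').fderiv, Finset.sum_add_distrib]

theorem laplacian_mul_norm_sub_sq {n : ℕ} (c : ℝ) (a x : EuclideanSpace ℝ (Fin n)) :
    laplacian (fun y => c * ‖y - a‖ ^ 2) x = 2 * c * n := by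
  simp [laplacian, fderiv_fderiv_mul_norm_sub_sq_apply, mul_comm]

theorem laplacian_nonpos_of_isLocalMax {n : ℕ} {u : EuclideanSpace ℝ (Fin n) → ℝ}
    {x : EuclideanSpace ℝ (Fin n)} (hmax : IsLocalMax u x)
    (hu : ∀ᶠ y in 𝓝 x, DifferentiableAt ℝ u y) (hu' : DifferentiableAt ℝ (fderiv ℝ u) x) :
    laplacian u x ≤ 0 :=
  Finset.sum_nonpos fun _ _ => hmax.fderiv_fderiv_apply_self_nonpos hu hu' _

theorem le_of_frontier_le_of_laplacian_pos {n : ℕ} {Ω : Set (EuclideanSpace ℝ (Fin n))}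
    (hΩo : IsOpen Ω) (hΩb : Bornology.IsBounded Ω) {u : EuclideanSpace ℝ (Fin n) → ℝ}
    (hcont : ContinuousOn u (closure Ω))
    (hdiff : ∀ x ∈ Ω, DifferentiableAt ℝ u x ∧ DifferentiableAt ℝ (fderiv ℝ u) x)
    (hlap : ∀ x ∈ Ω, 0 < laplacian u x) {M : ℝ} (hbdry : ∀ x ∈ frontier Ω, u x ≤ M) :
    ∀ x ∈ closure Ω, u x ≤ M := by
  intro x hx
  obtain ⟨x₀, hx₀, hmax⟩ := hΩb.isCompact_closure.exists_isMaxOn ⟨x, hx⟩ hcont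
  have hx₀Ω : x₀ ∉ Ω := by
    intro hx₀Ω
    have hlocal : IsLocalMax u x₀ :=
      hmax.isLocalMax (mem_of_superset (hΩo.mem_nhds hx₀Ω) subset_closure)
    have hu : ∀ᶠ y in 𝓝 x₀, DifferentiableAt ℝ u y :=
      eventually_of_mem (hΩo.mem_nhds hx₀Ω) fun y hy => (hdiff y hy).1
    exact (laplacian_nonpos_of_isLocalMax hlocal hu (hdiff x₀ hx₀Ω).2).not_gt (hlap x₀ hx₀Ω)
  have hx₀bdry : x₀ ∈ frontier Ω := by
    rw [frontier, hΩo.interior_eq]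
    exact ⟨hx₀, hx₀Ω⟩
  exact (hmax hx).trans (hbdry x₀ hx₀bdry)

theorem le_mul_sq_sub_norm_sub_sq_of_laplacian_ge {n : ℕ} {Ω : Set (EuclideanSpace ℝ (Fin n))}
    (hΩo : IsOpen Ω) (hΩb : Bornology.IsBounded Ω) {u : EuclideanSpace ℝ (Fin n) → ℝ}
    (hcont : ContinuousOn u (closure Ω))
    (hdiff : ∀ x ∈ Ω, DifferentiableAt ℝ u x ∧ DifferentiableAt ℝ (fderiv ℝ u) x)
    (hlap : ∀ x ∈ Ω, -2 ≤ laplacian u x) (hbdry : ∀ x ∈ frontier Ω, u x ≤ 0)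
    {a : EuclideanSpace ℝ (Fin n)} {R : ℝ} (hsub : Ω ⊆ closedBall a R) {c : ℝ} (hc : 1 < n * c) :
    ∀ x ∈ closure Ω, u x ≤ c * (R ^ 2 - ‖x - a‖ ^ 2) := by
  have hc₀ : 0 < c := pos_of_mul_pos_right (one_pos.trans hc) n.cast_nonneg
  have hq : ContDiff ℝ 2 fun y : EuclideanSpace ℝ (Fin n) => c * ‖y - a‖ ^ 2 :=
    contDiff_const.mul ((contDiff_norm_sq ℝ).comp (contDiff_id.sub contDiff_const))
  have hq₁ := hq.differentiable two_ne_zero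
  have hq₂ := (hq.fderiv_right (m := 1) le_rfl).differentiable one_ne_zero
  have hu : ∀ y ∈ Ω, ∀ᶠ z in 𝓝 y, DifferentiableAt ℝ u z := fun y hy =>
    eventually_of_mem (hΩo.mem_nhds hy) fun z hz => (hdiff z hz).1
  have hnorm : ∀ x ∈ closure Ω, ‖x - a‖ ≤ R := fun x hx =>
    mem_closedBall_iff_norm.mp (closure_minimal hsub isClosed_closedBall hx)
  intro x hx
  suffices u x + c * ‖x - a‖ ^ 2 ≤ c * R ^ 2 by linarith
  refine le_of_frontier_le_of_laplacian_pos (u := fun y => u y + c * ‖y - a‖ ^ 2) hΩo hΩb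
    (hcont.add hq.continuous.continuousOn) ?_ ?_ ?_ x hx
  · intro y hy
    exact ⟨(hdiff y hy).1.add (hq₁ y), (hasFDerivAt_fderiv_add (hu y hy) (hdiff y hy).2
      (Eventually.of_forall hq₁) (hq₂ y)).differentiableAt⟩
  · intro y hy
    rw [laplacian_add (hu y hy) (hdiff y hy).2 (Eventually.of_forall hq₁) (hq₂ y),
      laplacian_mul_norm_sub_sq]
    linarith [hlap y hy]
  · intro y hy
    have hy_sq : ‖y - a‖ ^ 2 ≤ R ^ 2 :=
      pow_le_pow_left₀ (norm_nonneg _) (hnorm y (frontier_subset_closure hy)) 2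
    linarith [hbdry y hy, mul_le_mul_of_nonneg_left hy_sq hc₀.le]

theorem comparison_circumscribed_ball_general
    {n : ℕ} (hn : 1 ≤ n) (Ω : Set (EuclideanSpace ℝ (Fin n)))
    (hΩo : IsOpen Ω) (hΩb : Bornology.IsBounded Ω)
    (u : EuclideanSpace ℝ (Fin n) → ℝ)
    (hcont : ContinuousOn u (closure Ω))
    (hdiff : ∀ x ∈ Ω, DifferentiableAt ℝ u x ∧ DifferentiableAt ℝ (fderiv ℝ u) x)
    (hlap : ∀ x ∈ Ω, laplacian u x = -2)
    (hbdry : ∀ x ∈ frontier Ω, u x = 0)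
    (xbar : EuclideanSpace ℝ (Fin n)) (R : ℝ)
    (hsub : Ω ⊆ Metric.closedBall xbar R) :
    ∀ x ∈ closure Ω, u x ≤ (R ^ 2 - ‖x - xbar‖ ^ 2) / n := by
  intro x hx
  have hn₀ : (0 : ℝ) < n := by exact_mod_cast hn
  have hbound : ∀ᶠ c in 𝓝[>] (1 / n : ℝ), u x ≤ c * (R ^ 2 - ‖x - xbar‖ ^ 2) := by
    filter_upwards [self_mem_nhdsWithin] with c (hc : 1 / (n : ℝ) < c)
    exact le_mul_sq_sub_norm_sub_sq_of_laplacian_ge hΩo hΩb hcont hdiff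
      (fun y hy => (hlap y hy).ge) (fun y hy => (hbdry y hy).le) hsub
      (by rwa [div_lt_iff₀' hn₀] at hc) x hx
  have hlim : Tendsto (fun c => c * (R ^ 2 - ‖x - xbar‖ ^ 2)) (𝓝[>] (1 / n : ℝ))
      (𝓝 ((R ^ 2 - ‖x - xbar‖ ^ 2) / n)) :=
    tendsto_nhdsWithin_of_tendsto_nhds
      ((continuous_mul_const _).tendsto' _ _ (one_div_mul_eq_div _ _))
  exact ge_of_tendsto hlim hbound

/-- Comparison with the radial solution on a circumscribed ball: a solution of
`Δu = −2` (i.e. `−Δ₂ᴺ u = 1`) vanishing on `∂Ω` is dominated by the radial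
solution `(R² − ‖x − x̄‖²)/n` whenever `Ω ⊆ closedBall(x̄, R)`. -/
theorem comparison_circumscribed_ball
    {n : ℕ} (hn : 1 ≤ n) (Ω : Set (EuclideanSpace ℝ (Fin n)))
    (hΩo : IsOpen Ω) (hΩb : Bornology.IsBounded Ω)
    (u : EuclideanSpace ℝ (Fin n) → ℝ)
    (hcont : ContinuousOn u (closure Ω))
    (hdiff : ∀ x ∈ Ω, DifferentiableAt ℝ u x ∧ DifferentiableAt ℝ (fderiv ℝ u) x)
    (hlap : ∀ x ∈ Ω, laplacian u x = -2)
    (hbdry : ∀ x ∈ frontier Ω, u x = 0)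
    (xbar : EuclideanSpace ℝ (Fin n)) (R : ℝ) (hR : 0 < R)
    (hsub : Ω ⊆ Metric.closedBall xbar R) :
    ∀ x ∈ closure Ω, u x ≤ (R ^ 2 - ‖x - xbar‖ ^ 2) / n :=
  comparison_circumscribed_ball_general hn Ω hΩo hΩb u hcont hdiff hlap hbdry xbar R hsub
end
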